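/- arXiv:2603.21602 — 2 statements merged into one kernel-verified Lean document; each statement's English description precedes it below -/
import Mathlib

section
/- There is an absolute constant C > 0 such that for every R > 0, every measurable g : (0,∞) → ℝ with ∫_0^∞ g(s)² s² ds < ∞ and g(s) = 0 for almost every s < R, and all real numbers 0 ≤ r₁ < r₂ ≤ R, the function v defined on {(x,t) : |x| > |t|} by v(x,t) = (2|x|)^(−1) ∫_{|x|−t}^{|x|+t} s·g(s) ds (oriented integral) satisfies ‖χ_{Ω_{r₁,r₂}} v‖_Y ≤ C · ((r₂ − r₁)/R)^(1/10) · (4π ∫_0^∞ g(s)² s² ds)^(1/2). -/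
open MeasureTheory Real Set

noncomputable section

/-- The ground state `W(x) = (1/3 + |x|^2)^(-1/2)` on `ℝ³`. -/
def W3 (x : EuclideanSpace ℝ (Fin 3)) : ℝ := (1/3 + ‖x‖^2) ^ (-(1:ℝ)/2)

/-- The rescaled ground state `W_λ(x) = λ^(-1/2) W(x/λ)`. -/
def Wlam (lam : ℝ) (x : EuclideanSpace ℝ (Fin 3)) : ℝ := lam ^ (-(1:ℝ)/2) * W3 (lam⁻¹ • x)

/-- The Strichartz norm `‖χ_Ψ u‖_Y = (∫ (∫_{(x,t)∈Ψ} |u|^10 dx)^(1/2) dt)^(1/5)`. -/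
def Ynorm (Ψ : Set (EuclideanSpace ℝ (Fin 3) × ℝ))
    (u : EuclideanSpace ℝ (Fin 3) → ℝ → ℝ) : ℝ :=
  (∫ t : ℝ, (∫ x in {x | (x, t) ∈ Ψ}, |u x t| ^ 10) ^ ((1:ℝ)/2)) ^ ((1:ℝ)/5)

/-- The norm `‖χ_Ψ u‖_{L¹L²} = ∫ (∫_{(x,t)∈Ψ} |u|² dx)^(1/2) dt`. -/
def L1L2 (Ψ : Set (EuclideanSpace ℝ (Fin 3) × ℝ))
    (u : EuclideanSpace ℝ (Fin 3) → ℝ → ℝ) : ℝ :=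
  ∫ t : ℝ, (∫ x in {x | (x, t) ∈ Ψ}, (u x t) ^ 2) ^ ((1:ℝ)/2)

/-- The channel region `Ω_{r₁,r₂} = {(x,t) : |t| + r₁ < |x| < |t| + r₂}`. -/
def channel (r₁ r₂ : ℝ) : Set (EuclideanSpace ℝ (Fin 3) × ℝ) :=
  {p | |p.2| + r₁ < ‖p.1‖ ∧ ‖p.1‖ < |p.2| + r₂}

/-- The radial free wave with radiation profile `G` (in the negative time direction):
`v(x,t) = |x|⁻¹ ∫_{t-|x|}^{t+|x|} G(s) ds`. -/
def freeWave (G : ℝ → ℝ) (x : EuclideanSpace ℝ (Fin 3)) (t : ℝ) : ℝ :=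
  ‖x‖⁻¹ * ∫ s in (t - ‖x‖)..(t + ‖x‖), G s

/-- `‖G‖_{L²(E)} = (∫_E |G|²)^(1/2)`. -/
def L2on (G : ℝ → ℝ) (E : Set ℝ) : ℝ := (∫ s in E, (G s)^2) ^ ((1:ℝ)/2)

/-- The set whose supremum is `sup_{0<r<λ} (λ/r) ∫_{-r}^r |G(s)|² ds`. -/
def tauA (G : ℝ → ℝ) (lam : ℝ) : Set ℝ :=
  {A | ∃ r, 0 < r ∧ r < lam ∧ A = (lam / r) * ∫ s in (-r)..r, (G s)^2}

/-- The set whose supremum is `sup_{r>0} r^(-1/2) ∫_{-r}^r |G(s)| ds`. -/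
def tauB (G : ℝ → ℝ) : Set ℝ :=
  {B | ∃ r, 0 < r ∧ B = (∫ s in (-r)..r, |G s|) / Real.sqrt r}

/-- `τ = (sup_{0<r<λ} (λ/r)∫_{-r}^r |G|²)^(1/2) + sup_{r>0} r^(-1/2)∫_{-r}^r |G|`. -/
def tau (G : ℝ → ℝ) (lam : ℝ) : ℝ := Real.sqrt (sSup (tauA G lam)) + sSup (tauB G)

/-!
On the time slice `|t| = τ` the channel is the annulus `τ + r₁ < |x| < τ + r₂`. Since `g` vanishes
below `R`, `v(x, t) = 0` unless `|x| + τ > R`, so on the slice `v` lives in the thinner annulus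
`max (τ + r₁) (R - τ) < |x| < τ + r₂`, of width at most `r₂ - r₁` and radius comparable to `R + τ`.
There Cauchy–Schwarz gives `|v| ≤ √(2τE) / (2|x|)` with `E = ∫ g(s)² s² ds`, hence
`∫ |v|¹⁰ dx ≲ E⁵ (r₂ - r₁) (R + τ)⁻³`. Taking square roots and integrating `(R + |t|)^(-3/2)` in `t`
gives `‖χ v‖_Y⁵ ≲ E^(5/2) ((r₂ - r₁) / R)^(1/2)`.
-/

theorem abs_setIntegral_le_sqrt_mul_sqrt {α : Type*} [MeasurableSpace α] {μ : Measure α}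
    {s : Set α} {f : α → ℝ} (hs : μ s ≠ ⊤) (hf : MemLp f 2 (μ.restrict s)) :
    |∫ x in s, f x ∂μ| ≤ √(∫ x in s, f x ^ 2 ∂μ) * √(μ.real s) := by
  have : IsFiniteMeasure (μ.restrict s) := isFiniteMeasure_restrict.2 hs
  have holder := integral_mul_le_Lp_mul_Lq_of_nonneg Real.HolderConjugate.two_two
    (Filter.Eventually.of_forall fun x => abs_nonneg (f x))
    (Filter.Eventually.of_forall fun _ => zero_le_one)
    (by rw [ENNReal.ofReal_ofNat]; exact hf.abs) (memLp_const (1 : ℝ))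
  simp only [mul_one, Real.one_rpow, integral_const, smul_eq_mul] at holder
  calc |∫ x in s, f x ∂μ| ≤ ∫ x in s, |f x| ∂μ := abs_integral_le_integral_abs
    _ ≤ _ := holder
    _ = √(∫ x in s, f x ^ 2 ∂μ) * √(μ.real s) := by
      simp only [Real.sqrt_eq_rpow, ← Real.rpow_natCast, Real.rpow_two, sq_abs]
      norm_num

theorem MeasureTheory.Measure.addHaar_real_ball_sdiff_closedBall_le {E : Type*}
    [NormedAddCommGroup E] [NormedSpace ℝ E] [MeasurableSpace E] [BorelSpace E] [FiniteDimensional ℝ E]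
    (μ : Measure E) [μ.IsAddHaarMeasure] (x : E) {a b : ℝ} (ha : 0 ≤ a) (hab : a ≤ b) :
    μ.real (Metric.ball x b \ Metric.closedBall x a) ≤
      (b ^ Module.finrank ℝ E - a ^ Module.finrank ℝ E) * μ.real (Metric.ball 0 1) := by
  calc μ.real (Metric.ball x b \ Metric.closedBall x a)
      ≤ μ.real (Metric.closedBall x b \ Metric.closedBall x a) :=
        measureReal_mono (sdiff_subset_sdiff_left Metric.ball_subset_closedBall)
          (measure_ne_top_of_subset sdiff_subset measure_closedBall_lt_top.ne)
    _ = _ := by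
      rw [measureReal_sdiff (Metric.closedBall_subset_closedBall hab) measurableSet_closedBall
          measure_closedBall_lt_top.ne,
        addHaar_real_closedBall μ x (ha.trans hab), addHaar_real_closedBall μ x ha, sub_mul]

theorem volume_real_unit_ball_fin_three :
    volume.real (Metric.ball (0 : EuclideanSpace ℝ (Fin 3)) 1) = 4 * π / 3 := by
  simp only [measureReal_def, EuclideanSpace.volume_ball_fin_three, ENNReal.ofReal_one, one_pow,
    one_mul]
  rw [ENNReal.toReal_ofReal (by positivity)]
  ring

theorem integrable_comp_abs {E : Type*} [NormedAddCommGroup E] {f : ℝ → E} (hf : IntegrableOn f (Ioi 0)) :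
    Integrable fun x => f |x| := by
  have hIoi : IntegrableOn (fun x => f |x|) (Ioi 0) :=
    hf.congr_fun (fun x hx => by rw [abs_of_pos (mem_Ioi.1 hx)]) measurableSet_Ioi
  have hIic : IntegrableOn (fun x => f |x|) (Iic 0) := by
    have hneg : MeasurableEmbedding fun x : ℝ => -x := (Homeomorph.neg ℝ).measurableEmbedding
    rw [← Measure.map_neg_eq_self (volume : Measure ℝ), hneg.integrableOn_map_iff]
    simp_rw [Function.comp_def, abs_neg, neg_preimage, neg_Iic, neg_zero]
    exact Iff.mpr integrableOn_Ici_iff_integrableOn_Ioi hIoi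
  rw [← integrableOn_univ, ← Iic_union_Ioi (a := (0 : ℝ))]
  exact hIic.union hIoi

theorem integrableOn_Ioi_add_rpow {a R : ℝ} (ha : a < -1) (hR : 0 < R) :
    IntegrableOn (fun t => (R + t) ^ a) (Ioi 0) := by
  have := (measurePreserving_add_left volume R).integrableOn_comp_preimage
    (MeasurableEquiv.addLeft R).measurableEmbedding (f := fun u : ℝ => u ^ a) (s := Ioi R)
  rw [preimage_const_add_Ioi, sub_self] at this
  exact this.2 (integrableOn_Ioi_rpow_of_lt ha hR)

theorem integral_Ioi_add_rpow {a R : ℝ} (ha : a < -1) (hR : 0 < R) :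
    ∫ t in Ioi 0, (R + t) ^ a = -R ^ (a + 1) / (a + 1) := by
  have := (measurePreserving_add_left volume R).setIntegral_preimage_emb
    (MeasurableEquiv.addLeft R).measurableEmbedding (fun u : ℝ => u ^ a) (Ioi R)
  rw [preimage_const_add_Ioi, sub_self] at this
  rw [this, integral_Ioi_rpow_of_lt ha hR]

theorem integrable_add_abs_rpow {a R : ℝ} (ha : a < -1) (hR : 0 < R) :
    Integrable fun t : ℝ => (R + |t|) ^ a :=
  integrable_comp_abs (integrableOn_Ioi_add_rpow ha hR)

theorem integral_add_abs_rpow {a R : ℝ} (ha : a < -1) (hR : 0 < R) :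
    ∫ t, (R + |t|) ^ a = -2 * R ^ (a + 1) / (a + 1) := by
  rw [integral_comp_abs (f := fun t => (R + t) ^ a), integral_Ioi_add_rpow ha hR]
  ring

theorem uIoc_sub_add (ρ t : ℝ) : uIoc (ρ - t) (ρ + t) = Ioc (ρ - |t|) (ρ + |t|) := by
  rcases le_total 0 t with ht | ht
  · rw [uIoc_of_le (by linarith), abs_of_nonneg ht]
  · rw [uIoc_of_ge (by linarith), abs_of_nonpos ht, sub_neg_eq_add, ← sub_eq_add_neg]

theorem setIntegral_Ioc_mul_eq_zero {g : ℝ → ℝ} {R a b : ℝ}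
    (hg : ∀ᵐ s : ℝ, 0 < s → s < R → g s = 0) (ha : 0 ≤ a) (hb : b ≤ R) (f : ℝ → ℝ) :
    ∫ s in Ioc a b, f s * g s = 0 := by
  rw [integral_Ioc_eq_integral_Ioo]
  refine integral_eq_zero_of_ae ((ae_restrict_iff' measurableSet_Ioo).2 ?_)
  filter_upwards [hg] with s hs hsab
  simp [hs (ha.trans_lt hsab.1) (hsab.2.trans_le hb)]

def radialWave (g : ℝ → ℝ) (ρ t : ℝ) : ℝ := (2 * ρ)⁻¹ * ∫ s in (ρ - t)..(ρ + t), s * g s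

theorem abs_radialWave (g : ℝ → ℝ) (ρ t : ℝ) :
    |radialWave g ρ t| = |2 * ρ|⁻¹ * |∫ s in Ioc (ρ - |t|) (ρ + |t|), s * g s| := by
  rw [radialWave, abs_mul, abs_inv, intervalIntegral.abs_integral_eq_abs_integral_uIoc,
    uIoc_sub_add]

theorem radialWave_eq_zero {g : ℝ → ℝ} {R ρ t : ℝ} (hg : ∀ᵐ s : ℝ, 0 < s → s < R → g s = 0)
    (hρ : |t| ≤ ρ) (hρR : ρ + |t| ≤ R) : radialWave g ρ t = 0 := by
  rw [← abs_eq_zero, abs_radialWave, setIntegral_Ioc_mul_eq_zero hg (by linarith) hρR,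
    abs_zero, mul_zero]

theorem abs_radialWave_le {g : ℝ → ℝ} (hg : Measurable g)
    (hint : IntegrableOn (fun s => g s ^ 2 * s ^ 2) (Ioi 0)) {ρ t : ℝ} (hρ : |t| < ρ) :
    |radialWave g ρ t| ≤ √(2 * |t| * ∫ s in Ioi 0, g s ^ 2 * s ^ 2) / (2 * ρ) := by
  have hsub : Ioc (ρ - |t|) (ρ + |t|) ⊆ Ioi 0 := fun s hs => by
    simp only [mem_Ioi]; linarith [hs.1]
  have hsq : ∀ s, (s * g s) ^ 2 = g s ^ 2 * s ^ 2 := fun s => by ring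
  have hmem : MemLp (fun s => s * g s) 2 (volume.restrict (Ioc (ρ - |t|) (ρ + |t|))) :=
    (memLp_two_iff_integrable_sq (measurable_id.mul hg).aestronglyMeasurable).2
      ((hint.mono_set hsub).congr_fun (fun s _ => (hsq s).symm) measurableSet_Ioc)
  have hcs := abs_setIntegral_le_sqrt_mul_sqrt measure_Ioc_lt_top.ne hmem
  have hmono : ∫ s in Ioc (ρ - |t|) (ρ + |t|), (s * g s) ^ 2 ≤ ∫ s in Ioi 0, g s ^ 2 * s ^ 2 := by
    simp only [hsq]
    exact setIntegral_mono_set hint (Filter.Eventually.of_forall fun s => by positivity)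
      hsub.eventuallyLE
  rw [Real.volume_real_Ioc_of_le (by linarith [abs_nonneg t]),
    show ρ + |t| - (ρ - |t|) = 2 * |t| by ring] at hcs
  rw [abs_radialWave, abs_of_pos (by linarith [abs_nonneg t] : 0 < 2 * ρ), inv_mul_eq_div,
    mul_comm (2 * |t|), Real.sqrt_mul (by positivity)]
  gcongr ?_ / _
  · linarith [abs_nonneg t]
  · exact hcs.trans (by gcongr)

theorem abs_radialWave_pow_ten_le {g : ℝ → ℝ} (hg : Measurable g)
    (hint : IntegrableOn (fun s => g s ^ 2 * s ^ 2) (Ioi 0)) {α ρ t : ℝ} (hα₀ : 0 < α)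
    (hα : |t| ≤ α) (hρ : α < ρ) :
    |radialWave g ρ t| ^ 10 ≤ (|t| * ∫ s in Ioi 0, g s ^ 2 * s ^ 2) ^ 5 / (32 * α ^ 10) := by
  set E := ∫ s in Ioi 0, g s ^ 2 * s ^ 2
  calc |radialWave g ρ t| ^ 10 ≤ (√(2 * |t| * E) / (2 * ρ)) ^ 10 :=
        pow_le_pow_left₀ (abs_nonneg _) (abs_radialWave_le hg hint (hα.trans_lt hρ)) 10
    _ ≤ (√(2 * |t| * E) / (2 * α)) ^ 10 :=
        pow_le_pow_left₀ (div_nonneg (Real.sqrt_nonneg _) (by linarith)) (by gcongr) 10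
    _ = (|t| * E) ^ 5 / (32 * α ^ 10) := by
        have hE : 0 ≤ E := setIntegral_nonneg measurableSet_Ioi fun s _ => by positivity
        rw [div_pow, show √(2 * |t| * E) ^ 10 = (√(2 * |t| * E) ^ 2) ^ 5 by ring,
          Real.sq_sqrt (by positivity)]
        ring

theorem channel_slice (r₁ r₂ t : ℝ) :
    {x : EuclideanSpace ℝ (Fin 3) | (x, t) ∈ channel r₁ r₂} =
      Metric.ball 0 (|t| + r₂) \ Metric.closedBall 0 (|t| + r₁) := by
  ext x
  simp [channel, and_comm]

/-- `(τE)⁵/(32α¹⁰)` bounds `|v|¹⁰` on the annulus `α < |x| < β`, of volume `(β³ - α³)·4π/3`. -/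
theorem annulus_mass_le {τ E α β R q : ℝ} (hτ : 0 ≤ τ) (hE : 0 ≤ E) (hR : 0 < R) (hαβ : α ≤ β)
    (hβq : β ≤ α + q) (hβ : β ≤ 3 * α) (hRα : R + τ ≤ 3 * α) :
    (τ * E) ^ 5 / (32 * α ^ 10) * ((β ^ 3 - α ^ 3) * (4 * π / 3)) ≤
      13 * 3 ^ 7 * π / 8 * E ^ 5 * q * (R + τ) ^ (-3 : ℝ) := by
  have hα : 0 < α := by linarith
  have hRτ : 0 < R + τ := by linarith
  have hcube : β ^ 3 - α ^ 3 ≤ 13 * α ^ 2 * q := by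
    have hsq : β ^ 2 + α * β + α ^ 2 ≤ 13 * α ^ 2 := by nlinarith
    calc β ^ 3 - α ^ 3 = (β - α) * (β ^ 2 + α * β + α ^ 2) := by ring
      _ ≤ q * (13 * α ^ 2) := mul_le_mul (by linarith) hsq (by nlinarith) (by linarith)
      _ = 13 * α ^ 2 * q := by ring
  have hdecay : τ ^ 5 / α ^ 8 ≤ 3 ^ 8 * (R + τ) ^ (-3 : ℝ) := by
    rw [Real.rpow_neg hRτ.le, show (R + τ) ^ (3 : ℝ) = (R + τ) ^ 3 by norm_cast,
      ← div_eq_mul_inv, div_le_div_iff₀ (by positivity) (by positivity)]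
    calc τ ^ 5 * (R + τ) ^ 3 ≤ (R + τ) ^ 5 * (R + τ) ^ 3 := by gcongr; linarith
      _ = (R + τ) ^ 8 := by ring
      _ ≤ (3 * α) ^ 8 := by gcongr
      _ = 3 ^ 8 * α ^ 8 := by ring
  calc (τ * E) ^ 5 / (32 * α ^ 10) * ((β ^ 3 - α ^ 3) * (4 * π / 3))
      ≤ (τ * E) ^ 5 / (32 * α ^ 10) * (13 * α ^ 2 * q * (4 * π / 3)) := by gcongr
    _ = 13 * π / 24 * E ^ 5 * q * (τ ^ 5 / α ^ 8) := by
        field_simp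
        ring
    _ ≤ 13 * π / 24 * E ^ 5 * q * (3 ^ 8 * (R + τ) ^ (-3 : ℝ)) := by
        have hq : 0 ≤ q := by linarith
        gcongr
    _ = 13 * 3 ^ 7 * π / 8 * E ^ 5 * q * (R + τ) ^ (-3 : ℝ) := by ring

theorem integral_channel_slice_radialWave_le {g : ℝ → ℝ} {R r₁ r₂ : ℝ} (hg : Measurable g)
    (hint : IntegrableOn (fun s => g s ^ 2 * s ^ 2) (Ioi 0)) (hR : 0 < R)
    (hg0 : ∀ᵐ s : ℝ, 0 < s → s < R → g s = 0) (hr₁ : 0 ≤ r₁) (hr₁₂ : r₁ < r₂) (hr₂ : r₂ ≤ R)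
    (t : ℝ) :
    ∫ x in {x : EuclideanSpace ℝ (Fin 3) | (x, t) ∈ channel r₁ r₂}, |radialWave g ‖x‖ t| ^ 10 ≤
      13 * 3 ^ 7 * π / 8 * (∫ s in Ioi 0, g s ^ 2 * s ^ 2) ^ 5 * (r₂ - r₁) *
        (R + |t|) ^ (-3 : ℝ) := by
  set E := ∫ s in Ioi 0, g s ^ 2 * s ^ 2
  set τ := |t|
  have hτ : 0 ≤ τ := abs_nonneg t
  set α := max (τ + r₁) (R - τ)
  set β := max α (τ + r₂)
  have hα₁ : τ + r₁ ≤ α := le_max_left _ _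
  have hα₂ : R - τ ≤ α := le_max_right _ _
  have hα : 0 < α := by linarith
  have hαβ : α ≤ β := le_max_left _ _
  set A := Metric.ball (0 : EuclideanSpace ℝ (Fin 3)) β \ Metric.closedBall 0 α
  set M := (τ * E) ^ 5 / (32 * α ^ 10)
  have hA : A ⊆ {x | (x, t) ∈ channel r₁ r₂} := by
    rintro x ⟨hxβ, hxα⟩
    simp only [channel_slice, Metric.mem_ball, Metric.mem_closedBall, dist_zero_right, not_le,
      mem_sdiff] at hxβ hxα ⊢
    exact ⟨(lt_max_iff.1 hxβ).resolve_left hxα.not_gt, hα₁.trans_lt hxα⟩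
  have hzero : ∀ x ∈ {x | (x, t) ∈ channel r₁ r₂} \ A, |radialWave g ‖x‖ t| ^ 10 = 0 := by
    rintro x ⟨hx, hxA⟩
    simp only [channel_slice, Metric.mem_ball, Metric.mem_closedBall, dist_zero_right, not_le,
      mem_sdiff, not_and, not_lt, A] at hx hxA
    have hxR : ‖x‖ ≤ R - τ :=
      (le_max_iff.1 (hxA (hx.1.trans_le (le_max_right _ _)))).resolve_left hx.2.not_ge
    rw [radialWave_eq_zero hg0 (by linarith) (by linarith), abs_zero, zero_pow (by norm_num)]
  have hbound : ∀ x ∈ A, ‖|radialWave g ‖x‖ t| ^ 10‖ ≤ M := by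
    rintro x ⟨-, hxα⟩
    simp only [Metric.mem_closedBall, dist_zero_right, not_le] at hxα
    rw [Real.norm_of_nonneg (by positivity)]
    exact abs_radialWave_pow_ten_le hg hint hα (by linarith) hxα
  have hE : 0 ≤ E := setIntegral_nonneg measurableSet_Ioi fun s _ => by positivity
  calc ∫ x in {x | (x, t) ∈ channel r₁ r₂}, |radialWave g ‖x‖ t| ^ 10
      = ∫ x in A, |radialWave g ‖x‖ t| ^ 10 :=
        setIntegral_eq_of_subset_of_forall_sdiff_eq_zero
          (channel_slice r₁ r₂ t ▸ measurableSet_ball.diff measurableSet_closedBall) hA hzero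
    _ ≤ M * volume.real A :=
        (le_abs_self _).trans (norm_setIntegral_le_of_norm_le_const
          (measure_ne_top_of_subset sdiff_subset measure_ball_lt_top.ne).lt_top hbound)
    _ ≤ M * ((β ^ 3 - α ^ 3) * (4 * π / 3)) := by
        gcongr
        simpa [volume_real_unit_ball_fin_three] using
          Measure.addHaar_real_ball_sdiff_closedBall_le volume (0 : EuclideanSpace ℝ (Fin 3))
            hα.le hαβ
    _ ≤ _ := annulus_mass_le hτ hE hR hαβ (max_le (by linarith) (by linarith))
          (max_le (by linarith) (by linarith)) (by linarith)

theorem rpow_one_fifth_le_of_le {I K E R d : ℝ} (hI : 0 ≤ I) (hK : 0 ≤ K) (hE : 0 ≤ E)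
    (hR : 0 < R) (hd : 0 ≤ d) (h : I ≤ √(K * E ^ 5 * d) * (4 * R ^ (-(1 : ℝ) / 2))) :
    I ^ ((1 : ℝ) / 5) ≤ (4 * √K) ^ ((1 : ℝ) / 5) * (d / R) ^ ((1 : ℝ) / 10) * √(4 * π * E) := by
  have hsqrt_pow : √(E ^ 5) = √E ^ 5 := by
    rw [← Real.sqrt_sq (by positivity : 0 ≤ √E ^ 5), ← pow_mul, mul_comm, pow_mul,
      Real.sq_sqrt hE]
  have hRinv : R ^ (-(1 : ℝ) / 2) = (√R)⁻¹ := by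
    rw [Real.sqrt_eq_rpow, ← Real.rpow_neg hR.le]
    norm_num
  have heq : √(K * E ^ 5 * d) * (4 * R ^ (-(1 : ℝ) / 2)) = 4 * √K * √(d / R) * √E ^ 5 := by
    rw [Real.sqrt_mul' _ hd, Real.sqrt_mul hK, Real.sqrt_div' _ hR.le, hRinv, hsqrt_pow]
    ring
  calc I ^ ((1 : ℝ) / 5) ≤ (4 * √K * √(d / R) * √E ^ 5) ^ ((1 : ℝ) / 5) :=
        Real.rpow_le_rpow hI (h.trans_eq heq) (by norm_num)
    _ = (4 * √K) ^ ((1 : ℝ) / 5) * (d / R) ^ ((1 : ℝ) / 10) * √E := by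
        have hroot : (√E ^ 5) ^ ((1 : ℝ) / 5) = √E := by
          rw [← Real.rpow_natCast, ← Real.rpow_mul (Real.sqrt_nonneg E)]
          norm_num
        rw [Real.mul_rpow (by positivity) (by positivity),
          Real.mul_rpow (by positivity) (by positivity), Real.sqrt_eq_rpow (d / R),
          ← Real.rpow_mul (by positivity), hroot]
        norm_num
    _ ≤ (4 * √K) ^ ((1 : ℝ) / 5) * (d / R) ^ ((1 : ℝ) / 10) * √(4 * π * E) := by
        gcongr
        nlinarith [Real.pi_gt_three]

theorem stmt9 :
    ∃ C : ℝ, 0 < C ∧ ∀ (g : ℝ → ℝ) (R r₁ r₂ : ℝ),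
      Measurable g →
      IntegrableOn (fun s => (g s)^2 * s^2) (Set.Ioi (0:ℝ)) →
      0 < R → (∀ᵐ s : ℝ, 0 < s → s < R → g s = 0) →
      0 ≤ r₁ → r₁ < r₂ → r₂ ≤ R →
      Ynorm (channel r₁ r₂)
          (fun x t => (2 * ‖x‖)⁻¹ * ∫ s in (‖x‖ - t)..(‖x‖ + t), s * g s)
        ≤ C * ((r₂ - r₁) / R) ^ ((1:ℝ)/10) *
            Real.sqrt (4 * π * ∫ s in Set.Ioi (0:ℝ), (g s)^2 * s^2) := by
  set K : ℝ := 13 * 3 ^ 7 * π / 8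
  refine ⟨(4 * √K) ^ ((1 : ℝ) / 5), by positivity, ?_⟩
  intro g R r₁ r₂ hg hint hR hg0 hr₁ hr₁₂ hr₂
  show Ynorm (channel r₁ r₂) (fun x t => radialWave g ‖x‖ t) ≤ _
  set E := ∫ s in Ioi 0, g s ^ 2 * s ^ 2
  have hE : 0 ≤ E := setIntegral_nonneg measurableSet_Ioi fun s _ => by positivity
  set c := K * E ^ 5 * (r₂ - r₁)
  have hc : 0 ≤ c := mul_nonneg (by positivity) (by linarith)
  have hslice : ∀ t : ℝ, (∫ x in {x | (x, t) ∈ channel r₁ r₂}, |radialWave g ‖x‖ t| ^ 10) ^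
      ((1 : ℝ) / 2) ≤ √c * (R + |t|) ^ (-3 / 2 : ℝ) := fun t =>
    calc _ ≤ (c * (R + |t|) ^ (-3 : ℝ)) ^ ((1 : ℝ) / 2) :=
          Real.rpow_le_rpow (integral_nonneg fun x => by positivity)
            (integral_channel_slice_radialWave_le hg hint hR hg0 hr₁ hr₁₂ hr₂ t) (by norm_num)
      _ = √c * (R + |t|) ^ (-3 / 2 : ℝ) := by
          rw [Real.mul_rpow hc (by positivity), ← Real.rpow_mul (by positivity),
            Real.sqrt_eq_rpow]
          norm_num
  have htime : ∫ t, (∫ x in {x | (x, t) ∈ channel r₁ r₂}, |radialWave g ‖x‖ t| ^ 10) ^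
      ((1 : ℝ) / 2) ≤ √c * (4 * R ^ (-(1 : ℝ) / 2)) :=
    calc _ ≤ ∫ t, √c * (R + |t|) ^ (-3 / 2 : ℝ) :=
          integral_mono_of_nonneg
            (Filter.Eventually.of_forall fun t => by positivity)
            ((integrable_add_abs_rpow (by norm_num) hR).const_mul √c)
            (Filter.Eventually.of_forall hslice)
      _ = √c * (4 * R ^ (-(1 : ℝ) / 2)) := by
          rw [integral_const_mul, integral_add_abs_rpow (by norm_num) hR,
            show (-3 / 2 : ℝ) + 1 = -1 / 2 by norm_num]
          ring
  exact rpow_one_fifth_le_of_le (integral_nonneg fun t => by positivity) (by positivity) hE hR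
    (by linarith) htime
end
end

section
/- There is an absolute constant C > 0 with the following property. Let G ∈ L²(ℝ), let λ > 0, and suppose τ = (sup_{0<r<λ} (λ/r)·∫_{−r}^{r} |G(s)|² ds)^(1/2) + sup_{r>0} r^(−1/2)·∫_{−r}^{r} |G(s)| ds is finite. Then for all 1 ≤ r₁ < r₂ ≤ λ, the associated radial free wave v_L satisfies ‖χ_{Ω_{r₁,r₂}} W⁴·v_L‖_{L¹L²} ≤ C · τ · λ^(−1/2) · r₁^(−3/2). -/
open MeasureTheory Real Set

noncomputable section

/-!
The weight `W⁴ ≤ |x|⁻⁴` carries all the decay, so it suffices to show that `v_L` is bounded by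
`3 τ λ^(-1/2)` outside the light cone `|t| < |x|`. There `|v_L(x,t)| ≤ |x|⁻¹ ∫_{-S}^{S} |G|` with
`S = |t| + |x| ≤ 2|x|`: if `S < λ`, Cauchy–Schwarz and the first part of `τ` give
`∫_{-S}^{S} |G| ≲ τ S λ^(-1/2)`; if `S ≥ λ`, the second part gives `∫_{-S}^{S} |G| ≤ τ S^(1/2)`
and `S^(-1/2) ≤ λ^(-1/2)`. Integrating `|x|⁻⁸` over `|x| > |t| + r₁` gives a slice norm
`≲ τ λ^(-1/2) (|t| + r₁)^(-5/2)`, whose integral in `t` is `≲ τ λ^(-1/2) r₁^(-3/2)`.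
-/

open Module Metric

lemma sq_integral_abs_le_measureReal_univ_mul {α : Type*} [MeasurableSpace α] {μ : Measure α}
    [IsFiniteMeasure μ] {f : α → ℝ} (hf : MemLp f 2 μ) :
    (∫ a, |f a| ∂μ) ^ 2 ≤ μ.real univ * ∫ a, f a ^ 2 ∂μ := by
  have h := integral_mul_le_Lp_mul_Lq_of_nonneg (μ := μ) Real.HolderConjugate.two_two
    (f := fun _ => (1 : ℝ)) (g := fun a => |f a|) (.of_forall fun _ => zero_le_one)
    (.of_forall fun _ => abs_nonneg _) (by simpa using memLp_const 1) (by simpa using hf.norm)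
  simp only [one_mul, integral_const, smul_eq_mul, rpow_two, sq_abs, one_pow, mul_one] at h
  rw [← sqrt_eq_rpow, ← sqrt_eq_rpow, ← sqrt_mul measureReal_nonneg] at h
  calc (∫ a, |f a| ∂μ) ^ 2 ≤ (√(μ.real univ * ∫ a, f a ^ 2 ∂μ)) ^ 2 :=
        pow_le_pow_left₀ (integral_nonneg fun _ => abs_nonneg _) h 2
    _ = μ.real univ * ∫ a, f a ^ 2 ∂μ :=
        sq_sqrt (mul_nonneg measureReal_nonneg (integral_nonneg fun _ => sq_nonneg _))

lemma MeasureTheory.MemLp.intervalIntegrable {E : Type*} [NormedAddCommGroup E] {f : ℝ → E}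
    {p : ENNReal} (hf : MemLp f p volume)
    (hp : 1 ≤ p) (a b : ℝ) : IntervalIntegrable f volume a b := by
  rw [intervalIntegrable_iff, uIoc]
  exact (hf.restrict _).integrable hp

lemma sq_intervalIntegral_abs_le {f : ℝ → ℝ} (hf : MemLp f 2 volume) {a b : ℝ} (hab : a ≤ b) :
    (∫ x in a..b, |f x|) ^ 2 ≤ (b - a) * ∫ x in a..b, f x ^ 2 := by
  have h := sq_integral_abs_le_measureReal_univ_mul (hf.restrict (Ioc a b))
  rwa [measureReal_restrict_apply_univ, Real.volume_real_Ioc_of_le hab,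
    ← intervalIntegral.integral_of_le hab, ← intervalIntegral.integral_of_le hab] at h

section Radial

variable {E : Type*} [NormedAddCommGroup E] [NormedSpace ℝ E] [FiniteDimensional ℝ E]
  [Nontrivial E]

lemma rpow_smul_indicator_Ioi_rpow {e ρ y : ℝ} (hy : 0 < y) :
    y ^ (finrank ℝ E - 1) • (Ioi ρ).indicator (fun r => r ^ (-e)) y
      = (Ioi ρ).indicator (fun r => r ^ ((finrank ℝ E : ℝ) - 1 - e)) y := by
  by_cases hyρ : y ∈ Ioi ρ
  · simp only [indicator_of_mem hyρ, smul_eq_mul]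
    rw [← rpow_natCast, ← rpow_add hy, Nat.cast_sub finrank_pos]
    ring_nf
  · simp [indicator_of_notMem hyρ]

variable [MeasurableSpace E] [BorelSpace E] (μ : Measure E) [μ.IsAddHaarMeasure]

lemma integrableOn_norm_rpow_neg_of_lt_norm {e ρ : ℝ} (he : (finrank ℝ E : ℝ) < e)
    (hρ : 0 < ρ) : IntegrableOn (fun x : E => ‖x‖ ^ (-e)) {x | ρ < ‖x‖} μ := by
  rw [← integrable_indicator_iff (measurableSet_lt measurable_const measurable_norm)]
  refine (integrable_fun_norm_addHaar μ (f := (Ioi ρ).indicator (fun r => r ^ (-e)))).2 ?_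
  refine (integrableOn_congr_fun (fun y (hy : y ∈ Ioi 0) =>
    rpow_smul_indicator_Ioi_rpow (E := E) hy) measurableSet_Ioi).2 ?_
  exact ((integrable_indicator_iff measurableSet_Ioi).2
    (integrableOn_Ioi_rpow_of_lt (by linarith) hρ)).integrableOn

lemma integral_norm_rpow_neg_of_lt_norm {e ρ : ℝ} (he : (finrank ℝ E : ℝ) < e) (hρ : 0 < ρ) :
    ∫ x in {x | ρ < ‖x‖}, ‖x‖ ^ (-e) ∂μ
      = finrank ℝ E * μ.real (ball 0 1) / (e - finrank ℝ E) * ρ ^ ((finrank ℝ E : ℝ) - e) := by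
  rw [← integral_indicator (measurableSet_lt measurable_const measurable_norm)]
  have h := integral_fun_norm_addHaar μ ((Ioi ρ).indicator (fun r => r ^ (-e)))
  rw [setIntegral_congr_fun measurableSet_Ioi (fun y (hy : y ∈ Ioi 0) =>
      rpow_smul_indicator_Ioi_rpow (E := E) hy),
    setIntegral_indicator measurableSet_Ioi, Ioi_inter_Ioi, max_eq_right hρ.le,
    integral_Ioi_rpow_of_lt (by linarith) hρ] at h
  convert h using 1
  · rfl
  · rw [nsmul_eq_mul, smul_eq_mul, show (finrank ℝ E : ℝ) - 1 - e + 1 = finrank ℝ E - e by ring,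
      neg_div, ← div_neg, neg_sub]
    ring

end Radial

lemma integral_norm_rpow_neg_eight_of_lt_norm {a : ℝ} (ha : 0 < a) :
    ∫ x in {x : EuclideanSpace ℝ (Fin 3) | a < ‖x‖}, ‖x‖ ^ (-(8:ℝ))
      = 4 * π / 5 * a ^ (-(5:ℝ)) := by
  rw [integral_norm_rpow_neg_of_lt_norm volume (by norm_num) ha, finrank_euclideanSpace_fin,
    measureReal_def, EuclideanSpace.volume_ball_fin_three, ENNReal.ofReal_one, one_pow, one_mul,
    ENNReal.toReal_ofReal (by positivity), show ((3:ℕ):ℝ) - 8 = -5 by norm_num]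
  push_cast
  ring

lemma integrable_abs_add_rpow {q r : ℝ} (hq : q < -1) (hr : 0 < r) :
    Integrable (fun t : ℝ => (|t| + r) ^ q) := by
  have h := (integrable_fun_norm_addHaar volume (E := ℝ) (f := fun y => (y + r) ^ q)).2
  simp only [finrank_self, tsub_self, pow_zero, one_smul, Real.norm_eq_abs] at h
  refine h ?_
  have hshift := (measurePreserving_add_right volume r).integrableOn_comp_preimage
    (Homeomorph.addRight r).measurableEmbedding (f := fun y => y ^ q) (s := Ioi r)
  rw [preimage_add_const_Ioi, sub_self] at hshift
  exact hshift.2 (integrableOn_Ioi_rpow_of_lt hq hr)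

lemma integral_abs_add_rpow {q r : ℝ} (hq : q < -1) (hr : 0 < r) :
    ∫ t : ℝ, (|t| + r) ^ q = -2 * r ^ (q + 1) / (q + 1) := by
  have hshift := (measurePreserving_add_right volume r).setIntegral_preimage_emb
    (Homeomorph.addRight r).measurableEmbedding (fun y => y ^ q) (Ioi r)
  rw [preimage_add_const_Ioi, sub_self] at hshift
  rw [integral_comp_abs (f := fun x => (x + r) ^ q), hshift, integral_Ioi_rpow_of_lt hq hr]
  ring

section Profile

variable {G : ℝ → ℝ} {lam s : ℝ}

lemma integral_sq_le_of_bddAbove_tauA (hA : BddAbove (tauA G lam)) (hs : 0 < s)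
    (hsl : s < lam) : ∫ x in (-s)..s, G x ^ 2 ≤ sSup (tauA G lam) * s / lam := by
  have h := le_csSup hA ⟨s, hs, hsl, rfl⟩
  rw [le_div_iff₀ (hs.trans hsl)]
  calc (∫ x in (-s)..s, G x ^ 2) * lam = s * (lam / s * ∫ x in (-s)..s, G x ^ 2) := by
        field_simp
    _ ≤ s * sSup (tauA G lam) := by gcongr
    _ = _ := mul_comm _ _

lemma integral_abs_le_of_bddAbove_tauB (hB : BddAbove (tauB G)) (hs : 0 < s) :
    ∫ x in (-s)..s, |G x| ≤ sSup (tauB G) * √s := by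
  have h := le_csSup hB ⟨s, hs, rfl⟩
  rwa [div_le_iff₀ (sqrt_pos.2 hs)] at h

lemma sSup_tauB_nonneg (hB : BddAbove (tauB G)) : 0 ≤ sSup (tauB G) := by
  have h := integral_abs_le_of_bddAbove_tauB hB one_pos
  rw [sqrt_one, mul_one] at h
  exact (intervalIntegral.integral_nonneg (by norm_num) fun x _ => abs_nonneg (G x)).trans h

lemma tau_nonneg (hB : BddAbove (tauB G)) : 0 ≤ tau G lam :=
  add_nonneg (sqrt_nonneg _) (sSup_tauB_nonneg hB)

lemma integral_abs_le_of_bddAbove_tauA (hG : MemLp G 2 volume) (hA : BddAbove (tauA G lam))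
    (hs : 0 < s) (hsl : s < lam) :
    ∫ x in (-s)..s, |G x| ≤ √2 * √(sSup (tauA G lam)) * s / √lam := by
  have hlam : 0 < lam := hs.trans hsl
  have hsq := integral_sq_le_of_bddAbove_tauA hA hs hsl
  have hA0 : 0 ≤ sSup (tauA G lam) := by
    by_contra! h
    have := (intervalIntegral.integral_nonneg (by linarith) fun x _ => sq_nonneg (G x)).trans hsq
    have : sSup (tauA G lam) * s / lam < 0 :=
      div_neg_of_neg_of_pos (mul_neg_of_neg_of_pos h hs) hlam
    linarith
  have hI : 0 ≤ ∫ x in (-s)..s, |G x| :=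
    intervalIntegral.integral_nonneg (by linarith) fun x _ => abs_nonneg (G x)
  calc ∫ x in (-s)..s, |G x| = √((∫ x in (-s)..s, |G x|) ^ 2) := (sqrt_sq hI).symm
    _ ≤ √((s - -s) * ∫ x in (-s)..s, G x ^ 2) :=
        sqrt_le_sqrt (sq_intervalIntegral_abs_le hG (by linarith))
    _ ≤ √(2 * sSup (tauA G lam) * (s / √lam) ^ 2) := by
        refine sqrt_le_sqrt ?_
        rw [div_pow, sq_sqrt hlam.le]
        calc (s - -s) * ∫ x in (-s)..s, G x ^ 2 = 2 * s * ∫ x in (-s)..s, G x ^ 2 := by ring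
          _ ≤ 2 * s * (sSup (tauA G lam) * s / lam) := by gcongr
          _ = _ := by ring
    _ = √2 * √(sSup (tauA G lam)) * s / √lam := by
        rw [sqrt_mul (by positivity), sqrt_mul zero_le_two, sqrt_sq (by positivity),
          mul_div_assoc]

lemma abs_freeWave_le (hG : ∀ a b, IntervalIntegrable G volume a b)
    (x : EuclideanSpace ℝ (Fin 3)) (t : ℝ) :
    |freeWave G x t| ≤ ‖x‖⁻¹ * ∫ s in (-(|t| + ‖x‖))..(|t| + ‖x‖), |G s| := by
  rw [freeWave, abs_mul, abs_inv, abs_norm]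
  gcongr
  calc |∫ s in (t - ‖x‖)..(t + ‖x‖), G s| ≤ ∫ s in (t - ‖x‖)..(t + ‖x‖), |G s| :=
        intervalIntegral.abs_integral_le_integral_abs (by linarith [norm_nonneg x])
    _ ≤ ∫ s in (-(|t| + ‖x‖))..(|t| + ‖x‖), |G s| :=
        intervalIntegral.integral_mono_interval (by linarith [neg_abs_le t])
          (by linarith [norm_nonneg x]) (by linarith [le_abs_self t])
          (.of_forall fun s => abs_nonneg (G s)) (hG _ _).abs

lemma abs_freeWave_le_tau (hG : MemLp G 2 volume) (hA : BddAbove (tauA G lam))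
    (hB : BddAbove (tauB G)) (hlam : 0 < lam) {x : EuclideanSpace ℝ (Fin 3)} {t : ℝ}
    (ht : |t| < ‖x‖) : |freeWave G x t| ≤ 3 * tau G lam / √lam := by
  set α := √(sSup (tauA G lam))
  set β := sSup (tauB G)
  have hα : 0 ≤ α := sqrt_nonneg _
  have hβ : 0 ≤ β := sSup_tauB_nonneg hB
  have hτ : tau G lam = α + β := rfl
  set S := |t| + ‖x‖
  have hx : 0 < ‖x‖ := (abs_nonneg t).trans_lt ht
  have hS : 0 < S := by positivity
  have hxS : ‖x‖⁻¹ ≤ 2 / S := by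
    rw [le_div_iff₀ hS]
    calc ‖x‖⁻¹ * S ≤ ‖x‖⁻¹ * (2 * ‖x‖) := by gcongr; linarith
      _ = 2 := by field_simp
  have hI : 0 ≤ ∫ s in (-S)..S, |G s| :=
    intervalIntegral.integral_nonneg (by linarith) fun x _ => abs_nonneg (G x)
  have hv : |freeWave G x t| ≤ 2 / S * ∫ s in (-S)..S, |G s| :=
    (abs_freeWave_le (hG.intervalIntegrable one_le_two) x t).trans
      (mul_le_mul_of_nonneg_right hxS hI)
  rcases lt_or_ge S lam with hSl | hSl
  · have h2 : √2 ≤ 3 / 2 := sqrt_le_iff.2 ⟨by norm_num, by norm_num⟩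
    calc |freeWave G x t| ≤ 2 / S * (√2 * α * S / √lam) := by
          grw [hv, integral_abs_le_of_bddAbove_tauA hG hA hS hSl]
      _ = 2 * √2 * α / √lam := by field_simp
      _ ≤ 3 * tau G lam / √lam := by
          rw [hτ]
          gcongr ?_ / _
          nlinarith [mul_le_mul_of_nonneg_right h2 hα]
  · calc |freeWave G x t| ≤ 2 / S * (β * √S) := by
          grw [hv, integral_abs_le_of_bddAbove_tauB hB hS]
      _ = 2 * β / √S := by
          field_simp
          rw [sq_sqrt hS.le, mul_comm]
      _ ≤ 2 * β / √lam := by gcongr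
      _ ≤ 3 * tau G lam / √lam := by
          rw [hτ]
          gcongr ?_ / _
          linarith

end Profile

lemma W3_pow_four_le {x : EuclideanSpace ℝ (Fin 3)} (hx : 0 < ‖x‖) :
    W3 x ^ 4 ≤ ‖x‖ ^ (-(4:ℝ)) := by
  have hW : W3 x ^ 4 = (1 / 3 + ‖x‖ ^ 2) ^ (-(2:ℝ)) := by
    rw [W3, ← rpow_mul_natCast (by positivity)]
    norm_num
  have hnorm : ‖x‖ ^ (-(4:ℝ)) = (‖x‖ ^ 2) ^ (-(2:ℝ)) := by
    rw [← rpow_natCast, ← rpow_mul hx.le]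
    norm_num
  rw [hW, hnorm]
  exact rpow_le_rpow_of_nonpos (by positivity) (by linarith) (by norm_num)

lemma measurableSet_channel (r₁ r₂ : ℝ) : MeasurableSet (channel r₁ r₂) := by
  rw [channel, ofPred_and]
  exact (measurableSet_lt (by fun_prop) (by fun_prop)).inter
    (measurableSet_lt (by fun_prop) (by fun_prop))

lemma integral_sq_slice_channel_le {u : EuclideanSpace ℝ (Fin 3) → ℝ → ℝ} {M r₁ r₂ : ℝ}
    (hr₁ : 0 < r₁) (hu : ∀ x t, (x, t) ∈ channel r₁ r₂ → |u x t| ≤ M * ‖x‖ ^ (-(4:ℝ)))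
    (t : ℝ) :
    ∫ x in {x | (x, t) ∈ channel r₁ r₂}, u x t ^ 2
      ≤ M ^ 2 * (4 * π / 5) * (|t| + r₁) ^ (-(5:ℝ)) := by
  set a := |t| + r₁
  have ha : 0 < a := by positivity
  have hslice : {x | (x, t) ∈ channel r₁ r₂} ⊆ {x | a < ‖x‖} := fun x hx => hx.1
  have hpow : ∀ x : EuclideanSpace ℝ (Fin 3),
      (M * ‖x‖ ^ (-(4:ℝ))) ^ 2 = M ^ 2 * ‖x‖ ^ (-(8:ℝ)) := fun x => by
    rw [mul_pow, ← rpow_mul_natCast (norm_nonneg x)]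
    norm_num
  have hint : IntegrableOn (fun x : EuclideanSpace ℝ (Fin 3) => M ^ 2 * ‖x‖ ^ (-(8:ℝ)))
      {x | a < ‖x‖} :=
    (integrableOn_norm_rpow_neg_of_lt_norm volume (by norm_num) ha).const_mul _
  calc ∫ x in {x | (x, t) ∈ channel r₁ r₂}, u x t ^ 2
      ≤ ∫ x in {x | (x, t) ∈ channel r₁ r₂}, M ^ 2 * ‖x‖ ^ (-(8:ℝ)) := by
        refine integral_mono_of_nonneg (.of_forall fun x => sq_nonneg _)
          (hint.mono_set hslice) (ae_restrict_of_forall_mem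
            ((measurableSet_channel r₁ r₂).preimage measurable_prodMk_right) fun x hx => ?_)
        dsimp only
        rw [← hpow, ← sq_abs]
        exact pow_le_pow_left₀ (abs_nonneg _) (hu x t hx) 2
    _ ≤ ∫ x in {x | a < ‖x‖}, M ^ 2 * ‖x‖ ^ (-(8:ℝ)) :=
        setIntegral_mono_set hint (.of_forall fun x => by positivity) hslice.eventuallyLE
    _ = M ^ 2 * (4 * π / 5) * a ^ (-(5:ℝ)) := by
        rw [integral_const_mul, integral_norm_rpow_neg_eight_of_lt_norm ha, mul_assoc]

lemma L1L2_channel_le {u : EuclideanSpace ℝ (Fin 3) → ℝ → ℝ} {M r₁ r₂ : ℝ}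
    (hr₁ : 0 < r₁) (hM : 0 ≤ M)
    (hu : ∀ x t, (x, t) ∈ channel r₁ r₂ → |u x t| ≤ M * ‖x‖ ^ (-(4:ℝ))) :
    L1L2 (channel r₁ r₂) u ≤ 4 / 3 * √(4 * π / 5) * M * r₁ ^ (-(3:ℝ) / 2) := by
  have hslice : ∀ t, (∫ x in {x | (x, t) ∈ channel r₁ r₂}, u x t ^ 2) ^ ((1:ℝ) / 2)
      ≤ M * √(4 * π / 5) * (|t| + r₁) ^ (-(5:ℝ) / 2) := by
    intro t
    rw [← sqrt_eq_rpow, sqrt_le_iff]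
    refine ⟨by positivity, (integral_sq_slice_channel_le hr₁ hu t).trans_eq ?_⟩
    rw [mul_pow, mul_pow, sq_sqrt (by positivity), ← rpow_mul_natCast (by positivity)]
    norm_num
  calc L1L2 (channel r₁ r₂) u ≤ ∫ t, M * √(4 * π / 5) * (|t| + r₁) ^ (-(5:ℝ) / 2) :=
        integral_mono_of_nonneg (.of_forall fun t => by positivity)
          ((integrable_abs_add_rpow (by norm_num) hr₁).const_mul _) (.of_forall hslice)
    _ = 4 / 3 * √(4 * π / 5) * M * r₁ ^ (-(3:ℝ) / 2) := by
        rw [integral_const_mul, integral_abs_add_rpow (by norm_num) hr₁]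
        norm_num
        ring

theorem stmt11 :
    ∃ C : ℝ, 0 < C ∧ ∀ (G : ℝ → ℝ) (lam r₁ r₂ : ℝ),
      MemLp G 2 (volume : Measure ℝ) → 0 < lam →
      BddAbove (tauA G lam) → BddAbove (tauB G) →
      1 ≤ r₁ → r₁ < r₂ → r₂ ≤ lam →
      L1L2 (channel r₁ r₂) (fun x t => (W3 x)^4 * freeWave G x t)
        ≤ C * tau G lam * lam ^ (-(1:ℝ)/2) * r₁ ^ (-(3:ℝ)/2) := by
  refine ⟨4 * √(4 * π / 5), by positivity, ?_⟩
  intro G lam r₁ r₂ hG hlam hA hB hr₁ _ _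
  have hr₁0 : 0 < r₁ := one_pos.trans_le hr₁
  have hτ : 0 ≤ tau G lam := tau_nonneg hB
  have hwave : ∀ x t, (x, t) ∈ channel r₁ r₂ →
      |W3 x ^ 4 * freeWave G x t| ≤ 3 * tau G lam / √lam * ‖x‖ ^ (-(4:ℝ)) := by
    rintro x t ⟨hx, -⟩
    have ht : |t| < ‖x‖ := by linarith
    rw [abs_mul, abs_of_nonneg (by positivity), mul_comm]
    exact mul_le_mul (abs_freeWave_le_tau hG hA hB hlam ht)
      (W3_pow_four_le ((abs_nonneg t).trans_lt ht)) (by positivity) (by positivity)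
  have hlam_rpow : lam ^ (-(1:ℝ) / 2) = (√lam)⁻¹ := by
    rw [neg_div, rpow_neg hlam.le, sqrt_eq_rpow]
  calc L1L2 (channel r₁ r₂) (fun x t => (W3 x)^4 * freeWave G x t)
      ≤ 4 / 3 * √(4 * π / 5) * (3 * tau G lam / √lam) * r₁ ^ (-(3:ℝ) / 2) :=
        L1L2_channel_le hr₁0 (by positivity) hwave
    _ = 4 * √(4 * π / 5) * tau G lam * lam ^ (-(1:ℝ)/2) * r₁ ^ (-(3:ℝ)/2) := by
        rw [hlam_rpow]
        ring
end
end
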